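/- arXiv:1710.00979 — 3 statements merged into one kernel-verified Lean document; each statement's English description precedes it below -/
import Mathlib

section
/- Let p ∈ (0,1) be constant. Then the series Σ_{n=1}^{∞} a_n(p) converges, and its value L satisfies (6 − 8p + 3p²)/(2p − 2p³ + p⁴) ≤ L ≤ (2 − p²)/p², where a_n(p) = Σ_{A ⊆ {1,…,n−1}, n ∉ ⟨A⟩} p^{|A|}(1−p)^{n−1−|A|}. -/
open Filter Topology
open scoped Classical BigOperators

/-- The set of gaps of a numerical semigroup `S ⊆ ℕ`. -/
def gapSet (S : AddSubmonoid ℕ) : Set ℕ := {n : ℕ | n ∉ S}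

/-- `S` is cofinite if its set of gaps is finite. -/
def IsCofinite (S : AddSubmonoid ℕ) : Prop := (gapSet S).Finite

/-- The minimal generators of `S`: nonzero elements of `S` that are not the
sum of two nonzero elements of `S`. -/
def minGens (S : AddSubmonoid ℕ) : Set ℕ :=
  {s : ℕ | s ∈ S ∧ s ≠ 0 ∧ ¬ ∃ a ∈ S, ∃ b ∈ S, a ≠ 0 ∧ b ≠ 0 ∧ s = a + b}

/-- The embedding dimension `e(S)`: the number of minimal generators of `S`. -/
noncomputable def embDim (S : AddSubmonoid ℕ) : ℕ := (minGens S).ncard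

/-- The genus `g(S)`: the number of gaps of `S` (junk value `0` if `S` is not cofinite). -/
noncomputable def genus (S : AddSubmonoid ℕ) : ℕ := (gapSet S).ncard

/-- The Frobenius number `F(S)`: the largest gap of `S`
(junk value `0` if `S` is not cofinite or `S = ℕ`). -/
noncomputable def frob (S : AddSubmonoid ℕ) : ℕ := sSup (gapSet S)

/-- A cofinite numerical semigroup `S ≠ ℕ` is irreducible if it is maximal with
respect to inclusion among numerical semigroups with Frobenius number `F(S)`. -/
def IsIrred (S : AddSubmonoid ℕ) : Prop :=
  IsCofinite S ∧ S ≠ ⊤ ∧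
    ∀ T : AddSubmonoid ℕ, S ≤ T → frob T = frob S → T = S

/-- The number of gaps of `S` that are at most `M`. -/
noncomputable def gapsUpTo (S : AddSubmonoid ℕ) (M : ℕ) : ℕ :=
  {x : ℕ | x ∉ S ∧ x ≤ M}.ncard

/-- The probability weight of a generating set `B ⊆ {1, …, M}` in the ER-type
model `S(M, p)`. -/
noncomputable def wt (p : ℝ) (M : ℕ) (B : Finset ℕ) : ℝ :=
  p ^ B.card * (1 - p) ^ (M - B.card)

/-- The probability in the ER-type model `S(M, p)` that the random numerical
semigroup `𝒮 = ⟨𝒜⟩` lies in the event `E`. -/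
noncomputable def probEvent (M : ℕ) (p : ℝ) (E : Set (AddSubmonoid ℕ)) : ℝ :=
  ∑ B ∈ (Finset.Icc 1 M).powerset,
    if AddSubmonoid.closure (B : Set ℕ) ∈ E then wt p M B else 0

/-- The expectation in the ER-type model `S(M, p)` of an invariant `X` of the
random numerical semigroup `𝒮 = ⟨𝒜⟩`. -/
noncomputable def expectVal (M : ℕ) (p : ℝ) (X : AddSubmonoid ℕ → ℕ) : ℝ :=
  ∑ B ∈ (Finset.Icc 1 M).powerset,
    (X (AddSubmonoid.closure (B : Set ℕ)) : ℝ) * wt p M B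

/-- `h_{n,i}`: the number of numerical semigroups `T` with `n ∉ T`, embedding
dimension `i`, and all minimal generators strictly less than `n/2`. -/
noncomputable def hvec (n i : ℕ) : ℕ :=
  {T : AddSubmonoid ℕ | n ∉ T ∧ embDim T = i ∧ ∀ a ∈ minGens T, 2 * a < n}.ncard

/-- `a_n(p)`: the probability that `n` is not in the semigroup generated by a
random subset of `{1, …, n-1}` chosen with inclusion probability `p`. -/
noncomputable def anp (n : ℕ) (p : ℝ) : ℝ :=
  ∑ A ∈ (Finset.Icc 1 (n - 1)).powerset,
    if n ∉ AddSubmonoid.closure (A : Set ℕ) then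
      p ^ A.card * (1 - p) ^ (n - 1 - A.card) else 0

/-
The term a_N is the probability, for a random B ⊆ {1, …, N-1} containing each element
independently with probability p, that N ∉ ⟨B⟩.

Upper bound: if N ∉ ⟨B⟩ then B contains no pair {i, N - i}. These pairs are disjoint, so
a_N ≤ (1 - p²)^⌊(N-1)/2⌋, with an extra factor 1 - p for even N (then N/2 ∉ B). Summing over N
gives (2 - p)/p².

Lower bound: let m = ⌊N/2⌋. Already N ∉ ⟨B⟩ when B ∩ [1, m] = ∅ (all sums of generators are
then either a single generator < N or exceed N), or when B ∩ [1, m] = {a} and N - a ∉ B for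
some a ∈ (N/4, N/2] with a ∤ N (the only sums below N are then a, 2a and single large
generators). These events are disjoint, and there are at least ⌈m/2⌉ - [2 ∣ N] - [3 ∣ N] such
a, since a divisor of N in (N/4, N/2] is N/2 or N/3. Summing the resulting lower bound for a_N
gives a rational function of p exceeding the stated bound by (1 - p)³ times a positive
rational function.
-/

open Finset

section Bernoulli

variable {α : Type*} [DecidableEq α] (p : ℝ)

noncomputable def bernWeight (s B : Finset α) : ℝ :=
  ∏ i ∈ s, if i ∈ B then p else 1 - p

noncomputable def bernProb (s : Finset α) (E : Finset α → Prop) : ℝ :=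
  ∑ B ∈ s.powerset, if E B then bernWeight p s B else 0

variable {p} {s t u v B : Finset α} {E E' : Finset α → Prop}

lemma bernWeight_eq_of_subset (hB : B ⊆ s) :
    bernWeight p s B = p ^ #B * (1 - p) ^ (#s - #B) := by
  rw [bernWeight, ← union_sdiff_of_subset hB, prod_union disjoint_sdiff,
    prod_congr rfl fun i hi => if_pos hi,
    prod_congr rfl fun i hi => if_neg (mem_sdiff.1 hi).2, prod_const, prod_const,
    union_sdiff_of_subset hB, card_sdiff_of_subset hB]

lemma bernWeight_nonneg (h0 : 0 ≤ p) (h1 : p ≤ 1) : 0 ≤ bernWeight p s B :=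
  prod_nonneg fun i _ => by split_ifs <;> linarith

lemma bernWeight_inter_self : bernWeight p s (B ∩ s) = bernWeight p s B :=
  prod_congr rfl fun i hi => by simp [hi]

lemma bernProb_true : bernProb p s (fun _ => True) = 1 := by
  simp only [bernProb, if_true]
  calc ∑ B ∈ s.powerset, bernWeight p s B
      = ∑ B ∈ s.powerset, (∏ _ ∈ B, p) * ∏ _ ∈ s \ B, (1 - p) :=
        sum_congr rfl fun B hB => by
          rw [bernWeight_eq_of_subset (mem_powerset.1 hB), prod_const, prod_const,
            card_sdiff_of_subset (mem_powerset.1 hB)]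
    _ = 1 := by rw [← prod_add]; simp

lemma bernProb_nonneg (h0 : 0 ≤ p) (h1 : p ≤ 1) : 0 ≤ bernProb p s E :=
  sum_nonneg fun _ _ => by split_ifs <;> simp [bernWeight_nonneg h0 h1]

lemma bernProb_mono (h0 : 0 ≤ p) (h1 : p ≤ 1) (h : ∀ B ⊆ s, E B → E' B) :
    bernProb p s E ≤ bernProb p s E' :=
  sum_le_sum fun B hB => by
    have := h B (mem_powerset.1 hB)
    split_ifs <;> simp_all [bernWeight_nonneg h0 h1]

lemma bernProb_le_one (h0 : 0 ≤ p) (h1 : p ≤ 1) : bernProb p s E ≤ 1 :=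
  bernProb_true (s := s) ▸ bernProb_mono h0 h1 fun _ _ _ => trivial

lemma bernProb_not : bernProb p s (fun B => ¬ E B) = 1 - bernProb p s E := by
  rw [eq_sub_iff_add_eq, ← bernProb_true (p := p) (s := s), bernProb, bernProb, bernProb,
    ← sum_add_distrib]
  exact sum_congr rfl fun B _ => by split_ifs <;> simp_all

lemma bernProb_union (hst : Disjoint s t) (E₁ E₂ : Finset α → Prop) :
    bernProb p (s ∪ t) (fun B => E₁ (B ∩ s) ∧ E₂ (B ∩ t)) = bernProb p s E₁ * bernProb p t E₂ := by
  rw [bernProb, bernProb, bernProb, sum_mul_sum, ← sum_product']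
  have hinter : ∀ C ⊆ s, ∀ D ⊆ t, (C ∪ D) ∩ s = C ∧ (C ∪ D) ∩ t = D := fun C hC D hD => by
    constructor <;> ext i <;> grind [disjoint_left]
  refine sum_nbij' (fun B => (B ∩ s, B ∩ t)) (fun CD => CD.1 ∪ CD.2) ?_ ?_ ?_ ?_ ?_
  · simp
  · intro CD hCD
    simp only [mem_product, mem_powerset] at hCD ⊢
    exact union_subset_union hCD.1 hCD.2
  · intro B hB
    simp only [mem_powerset] at hB
    simp [← inter_union_distrib_left, inter_eq_left.2 hB]
  · intro CD hCD
    simp only [mem_product, mem_powerset] at hCD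
    simp [hinter _ hCD.1 _ hCD.2]
  · intro B hB
    rw [bernWeight, prod_union hst, ← bernWeight, ← bernWeight, ← bernWeight_inter_self (s := s),
      ← bernWeight_inter_self (s := t)]
    split_ifs <;> simp_all

lemma bernProb_inter_eq (hvu : v ⊆ u) (hus : u ⊆ s) :
    bernProb p s (fun B => B ∩ u = v) = p ^ #v * (1 - p) ^ (#u - #v) := by
  have h := bernProb_union (p := p) (disjoint_sdiff : Disjoint u (s \ u)) (· = v) (fun _ => True)
  simp only [and_true, union_sdiff_of_subset hus, bernProb_true, mul_one] at h
  rw [h, bernProb, sum_eq_single_of_mem v (mem_powerset.2 hvu) fun B _ hB => by simp [hB]]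
  simp [bernWeight_eq_of_subset hvu]

lemma sum_bernProb_of_pairwise {ι : Type*} (I : Finset ι) (E : ι → Finset α → Prop)
    (hE : ∀ B, ∀ i ∈ I, ∀ j ∈ I, E i B → E j B → i = j) :
    ∑ i ∈ I, bernProb p s (E i) = bernProb p s (fun B => ∃ i ∈ I, E i B) := by
  simp only [bernProb]
  rw [sum_comm]
  refine sum_congr rfl fun B _ => ?_
  by_cases h : ∃ i ∈ I, E i B
  · obtain ⟨i, hi, hiB⟩ := h
    rw [sum_eq_single_of_mem i hi fun j hj hji => if_neg fun hjB => hji (hE B j hj i hi hjB hiB),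
      if_pos hiB, if_pos ⟨i, hi, hiB⟩]
  · push Not at h
    rw [sum_eq_zero fun i hi => if_neg (h i hi), if_neg (by simpa using h)]

lemma bernProb_not_superset (hus : u ⊆ s) :
    bernProb p s (fun B => ¬ u ⊆ B) = 1 - p ^ #u := by
  have h := bernProb_inter_eq (p := p) (subset_refl u) hus
  simp only [inter_eq_right, Nat.sub_self, pow_zero, mul_one] at h
  rw [bernProb_not, h]

end Bernoulli

section Series

variable {M : Type*} [AddCommMonoid M] [TopologicalSpace M]

lemma HasSum.comp_div_two [ContinuousAdd M] {g : ℕ → M} {a : M} (hg : HasSum g a) :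
    HasSum (fun n => g (n / 2)) (a + a) :=
  HasSum.even_add_odd (by simpa using hg) (by simpa [Nat.mul_add_div] using hg)

lemma HasSum.ite_dvd {d : ℕ} (hd : d ≠ 0) {f : ℕ → M} {a : M}
    (hf : HasSum (fun j => f (d * j)) a) : HasSum (fun n => if d ∣ n then f n else 0) a := by
  refine ((mul_right_injective₀ hd).hasSum_iff fun n hn =>
    if_neg fun ⟨j, hj⟩ => hn ⟨j, hj.symm⟩).1 ?_
  simpa [Function.comp_def] using hf

end Series

lemma hasSum_ceil_half_mul_geometric {q : ℝ} (hq0 : 0 ≤ q) (hq1 : q < 1) :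
    HasSum (fun m => (((m + 1) / 2 : ℕ) : ℝ) * q ^ m) (q / ((1 - q) ^ 2 * (1 + q))) := by
  have hr : ‖q ^ 2‖ < 1 := by rw [norm_pow, Real.norm_of_nonneg hq0]; nlinarith
  have heven : HasSum (fun k => (((2 * k + 1) / 2 : ℕ) : ℝ) * q ^ (2 * k))
      (q ^ 2 / (1 - q ^ 2) ^ 2) := by
    simpa [Nat.mul_add_div, pow_mul] using hasSum_coe_mul_geometric_of_norm_lt_one hr
  have hodd : HasSum (fun k => (((2 * k + 1 + 1) / 2 : ℕ) : ℝ) * q ^ (2 * k + 1))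
      (q * (q ^ 2 / (1 - q ^ 2) ^ 2 + (1 - q ^ 2)⁻¹)) := by
    refine ((hasSum_coe_mul_geometric_of_norm_lt_one hr).add
      (hasSum_geometric_of_norm_lt_one hr)).mul_left q |>.congr_fun fun k => ?_
    rw [show (2 * k + 1 + 1) / 2 = k + 1 by omega, pow_succ, pow_mul]
    push_cast; ring
  convert HasSum.even_add_odd (f := fun m => (((m + 1) / 2 : ℕ) : ℝ) * q ^ m) heven hodd using 1
  have hne : 1 - q ≠ 0 := by linarith
  have hne' : 1 + q ≠ 0 := by linarith
  rw [show 1 - q ^ 2 = (1 - q) * (1 + q) by ring]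
  field_simp
  ring

lemma hasSum_pow_three_mul_div_two {q : ℝ} (hq0 : 0 ≤ q) (hq1 : q < 1) :
    HasSum (fun j => q ^ (3 * j / 2)) ((1 + q) / (1 - q ^ 3)) := by
  have hc : q ^ 3 < 1 := by nlinarith [pow_le_one₀ hq0 hq1.le (n := 2)]
  have hgeom := hasSum_geometric_of_lt_one (pow_nonneg hq0 3) hc
  have heven : HasSum (fun k => q ^ (3 * (2 * k) / 2)) (1 - q ^ 3)⁻¹ := by
    refine hgeom.congr_fun fun k => ?_
    rw [show 3 * (2 * k) / 2 = 3 * k by omega, pow_mul]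
  have hodd : HasSum (fun k => q ^ (3 * (2 * k + 1) / 2)) (q * (1 - q ^ 3)⁻¹) := by
    refine (hgeom.mul_left q).congr_fun fun k => ?_
    rw [show 3 * (2 * k + 1) / 2 = 3 * k + 1 by omega, pow_succ, pow_mul, mul_comm]
  convert HasSum.even_add_odd (f := fun j => q ^ (3 * j / 2)) heven hodd using 1
  ring

lemma anp_eq_bernProb (N : ℕ) (p : ℝ) :
    anp N p = bernProb p (Icc 1 (N - 1)) (fun B => N ∉ AddSubmonoid.closure (B : Set ℕ)) := by
  refine sum_congr rfl fun B hB => ?_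
  rw [bernWeight_eq_of_subset (mem_powerset.1 hB), Nat.card_Icc, Nat.add_sub_cancel]
  split_ifs <;> simp_all

lemma anp_nonneg {p : ℝ} (hp0 : 0 ≤ p) (hp1 : p ≤ 1) (N : ℕ) : 0 ≤ anp N p :=
  anp_eq_bernProb N p ▸ bernProb_nonneg hp0 hp1

lemma not_mem_closure_of_forall_half_lt {N : ℕ} (hN : 0 < N) {B : Set ℕ}
    (hB : ∀ b ∈ B, N < 2 * b ∧ b ≠ N) : N ∉ AddSubmonoid.closure B := by
  let T : AddSubmonoid ℕ :=
    { carrier := {x | x = 0 ∨ (N < 2 * x ∧ x ≠ N)}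
      zero_mem' := Or.inl rfl
      add_mem' := by simp only [Set.mem_ofPred_eq]; omega }
  have hBT : B ⊆ T := fun b hb => Or.inr (hB b hb)
  exact fun h => (show N ∉ T by rintro (h | h) <;> omega) (AddSubmonoid.closure_le.2 hBT h)

lemma not_mem_closure_of_forall_eq_or_half_lt {N a : ℕ} (h2a : 2 * a < N) (h4a : N < 4 * a)
    (h3a : 3 * a ≠ N) {B : Set ℕ} (hB : ∀ b ∈ B, b = a ∨ (N < 2 * b ∧ b ≠ N ∧ b + a ≠ N)) :
    N ∉ AddSubmonoid.closure B := by
  let T : AddSubmonoid ℕ :=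
    { carrier := {x | x = 0 ∨ x = a ∨ x = 2 * a ∨ (N < 2 * x ∧ x ≠ N ∧ x + a ≠ N)}
      zero_mem' := Or.inl rfl
      add_mem' := by simp only [Set.mem_ofPred_eq]; omega }
  have hBT : B ⊆ T := fun b hb => by
    rcases hB b hb with h | h
    exacts [Or.inr (Or.inl h), Or.inr (Or.inr (Or.inr h))]
  exact fun h => (show N ∉ T by rintro (h | h | h | h) <;> omega) (AddSubmonoid.closure_le.2 hBT h)

def SumAvoiding (N : ℕ) (B : Finset ℕ) : Prop := ∀ i ∈ B, ∀ j ∈ B, i + j ≠ N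

section UpperBound

variable {p : ℝ}

lemma bernProb_sumAvoiding_Icc_le_step (hp0 : 0 ≤ p) (hp1 : p ≤ 1) {N a : ℕ} (ha : 2 * a < N) :
    bernProb p (Icc a (N - a)) (SumAvoiding N)
      ≤ (1 - p ^ 2) * bernProb p (Icc (a + 1) (N - (a + 1))) (SumAvoiding N) := by
  have hsplit : Icc a (N - a) = {a, N - a} ∪ Icc (a + 1) (N - (a + 1)) := by
    ext i; simp only [mem_Icc, mem_union, mem_insert, mem_singleton]; omega
  have hdisj : Disjoint ({a, N - a} : Finset ℕ) (Icc (a + 1) (N - (a + 1))) := by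
    simp only [disjoint_left, mem_insert, mem_singleton, mem_Icc]; omega
  have hpair : #({a, N - a} : Finset ℕ) = 2 := card_pair (by omega)
  calc bernProb p (Icc a (N - a)) (SumAvoiding N)
      ≤ bernProb p ({a, N - a} ∪ Icc (a + 1) (N - (a + 1)))
          (fun B => ¬ {a, N - a} ⊆ B ∩ {a, N - a} ∧
            SumAvoiding N (B ∩ Icc (a + 1) (N - (a + 1)))) := by
        rw [← hsplit]
        refine bernProb_mono hp0 hp1 fun B _ hB => ⟨fun h => ?_, fun i hi j hj => ?_⟩
        · have := insert_subset_iff.1 (h.trans inter_subset_left)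
          exact hB a this.1 (N - a) (singleton_subset_iff.1 this.2) (by omega)
        · exact hB i (mem_of_mem_inter_left hi) j (mem_of_mem_inter_left hj)
    _ = (1 - p ^ 2) * bernProb p (Icc (a + 1) (N - (a + 1))) (SumAvoiding N) := by
        rw [bernProb_union hdisj (fun C => ¬ {a, N - a} ⊆ C),
          bernProb_not_superset (subset_refl _), hpair]

lemma bernProb_sumAvoiding_Icc_le_iterate (hp0 : 0 ≤ p) (hp1 : p ≤ 1) {N : ℕ} (k a : ℕ)
    (hak : 2 * (a + k) ≤ N + 1) : bernProb p (Icc a (N - a)) (SumAvoiding N)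
      ≤ (1 - p ^ 2) ^ k * bernProb p (Icc (a + k) (N - (a + k))) (SumAvoiding N) := by
  have hq : 0 ≤ 1 - p ^ 2 := by nlinarith
  induction k generalizing a with
  | zero => simp
  | succ k ih =>
    calc bernProb p (Icc a (N - a)) (SumAvoiding N)
        ≤ (1 - p ^ 2) * bernProb p (Icc (a + 1) (N - (a + 1))) (SumAvoiding N) :=
          bernProb_sumAvoiding_Icc_le_step hp0 hp1 (by omega)
      _ ≤ (1 - p ^ 2) * ((1 - p ^ 2) ^ k *
            bernProb p (Icc (a + 1 + k) (N - (a + 1 + k))) (SumAvoiding N)) :=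
          mul_le_mul_of_nonneg_left (ih (a + 1) (by omega)) hq
      _ = _ := by rw [← mul_assoc, ← pow_succ', add_right_comm, add_assoc]

lemma bernProb_sumAvoiding_Icc_center_le (hp0 : 0 ≤ p) (hp1 : p ≤ 1) (N m : ℕ) :
    bernProb p (Icc m (N - m)) (SumAvoiding N) ≤ if 2 * m = N then 1 - p else 1 := by
  split_ifs with hm
  · have hIcc : Icc m (N - m) = {m} := by rw [← hm, show 2 * m - m = m by omega, Icc_self]
    calc bernProb p (Icc m (N - m)) (SumAvoiding N)
        ≤ bernProb p (Icc m (N - m)) (fun B => ¬ {m} ⊆ B) :=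
          bernProb_mono hp0 hp1 fun B _ hB h =>
            hB m (singleton_subset_iff.1 h) m (singleton_subset_iff.1 h) (by omega)
      _ = 1 - p := by rw [bernProb_not_superset (by rw [hIcc]), card_singleton, pow_one]
  · exact bernProb_le_one hp0 hp1

noncomputable def anpUpper (p : ℝ) (N : ℕ) : ℝ :=
  (1 - p ^ 2) ^ ((N - 1) / 2) * if 2 ∣ N then 1 - p else 1

lemma anp_le_anpUpper (hp0 : 0 ≤ p) (hp1 : p ≤ 1) {N : ℕ} (hN : 0 < N) :
    anp N p ≤ anpUpper p N := by
  have hq : 0 ≤ 1 - p ^ 2 := by nlinarith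
  have hcenter : (if 2 * (1 + (N - 1) / 2) = N then 1 - p else 1 : ℝ) =
      if 2 ∣ N then 1 - p else 1 := by
    split_ifs <;> first | rfl | omega
  calc anp N p
      ≤ bernProb p (Icc 1 (N - 1)) (SumAvoiding N) := by
        rw [anp_eq_bernProb]
        refine bernProb_mono hp0 hp1 fun B _ hB i hi j hj hij => hB ?_
        rw [← hij]
        exact add_mem (AddSubmonoid.subset_closure hi) (AddSubmonoid.subset_closure hj)
    _ ≤ (1 - p ^ 2) ^ ((N - 1) / 2) *
          bernProb p (Icc (1 + (N - 1) / 2) (N - (1 + (N - 1) / 2))) (SumAvoiding N) :=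
        bernProb_sumAvoiding_Icc_le_iterate hp0 hp1 _ 1 (by omega)
    _ ≤ anpUpper p N := by
        rw [anpUpper, ← hcenter]
        exact mul_le_mul_of_nonneg_left (bernProb_sumAvoiding_Icc_center_le hp0 hp1 _ _)
          (pow_nonneg hq _)

lemma hasSum_anpUpper (hp0 : 0 < p) (hp1 : p < 1) :
    HasSum (fun n => anpUpper p (n + 1)) ((2 - p) / p ^ 2) := by
  have hq0 : 0 ≤ 1 - p ^ 2 := by nlinarith
  have hq1 : 1 - p ^ 2 < 1 := by nlinarith
  have hgeom := hasSum_geometric_of_lt_one hq0 hq1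
  have hsum : (2 - p) / p ^ 2 = (1 - (1 - p ^ 2))⁻¹ + (1 - (1 - p ^ 2))⁻¹ * (1 - p) := by
    field_simp; ring
  rw [hsum]
  have heven (k : ℕ) : anpUpper p (2 * k + 1) = (1 - p ^ 2) ^ k := by
    rw [anpUpper, if_neg (by omega), show (2 * k + 1 - 1) / 2 = k by omega, mul_one]
  have hodd (k : ℕ) : anpUpper p (2 * k + 1 + 1) = (1 - p ^ 2) ^ k * (1 - p) := by
    rw [anpUpper, if_pos (by omega), show (2 * k + 1 + 1 - 1) / 2 = k by omega]
  refine HasSum.even_add_odd ?_ ?_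
  · simpa only [heven] using hgeom
  · simpa only [hodd] using hgeom.mul_right (1 - p)

end UpperBound

section LowerBound

variable {p : ℝ}

def smallNonDivisors (N : ℕ) : Finset ℕ := {a ∈ Ioc (N / 4) (N / 2) | ¬ a ∣ N}

lemma mem_smallNonDivisors {N a : ℕ} (ha : a ∈ smallNonDivisors N) :
    a ≤ N / 2 ∧ 2 * a < N ∧ N < 4 * a ∧ 3 * a ≠ N := by
  simp only [smallNonDivisors, mem_filter, mem_Ioc] at ha
  have h2 : 2 * a ≠ N := fun h => ha.2 ⟨2, by omega⟩
  have h3 : 3 * a ≠ N := fun h => ha.2 ⟨3, by omega⟩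
  omega

-- `(N / 2 + 1) / 2 = N / 2 - N / 4 = #(Ioc (N / 4) (N / 2))`
lemma card_smallNonDivisors (N : ℕ) :
    (N / 2 + 1) / 2 ≤
      #(smallNonDivisors N) + (if 2 ∣ N then 1 else 0) + (if 3 ∣ N then 1 else 0) := by
  have hdvd : {a ∈ Ioc (N / 4) (N / 2) | a ∣ N} ⊆
      image (N / ·) {k ∈ ({2, 3} : Finset ℕ) | k ∣ N} := by
    intro a ha
    simp only [mem_filter, mem_Ioc] at ha
    obtain ⟨⟨ha1, ha2⟩, k, rfl⟩ := ha
    have hk2 : 2 ≤ k := by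
      by_contra h
      have := Nat.mul_le_mul_left a (show k ≤ 1 by omega)
      omega
    have hk3 : k ≤ 3 := by
      by_contra h
      have := Nat.mul_le_mul_left a (show 4 ≤ k by omega)
      omega
    simp only [mem_image, mem_filter, mem_insert, mem_singleton]
    exact ⟨k, ⟨by omega, dvd_mul_left k a⟩, Nat.mul_div_cancel a (by omega)⟩
  have hcard := card_filter_add_card_filter_not (s := Ioc (N / 4) (N / 2)) (· ∣ N)
  have := (card_le_card hdvd).trans card_image_le
  have h23 : #{k ∈ ({2, 3} : Finset ℕ) | k ∣ N} =
      (if 2 ∣ N then 1 else 0) + (if 3 ∣ N then 1 else 0) := by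
    rw [filter_insert, filter_singleton]; split_ifs <;> simp
  rw [Nat.card_Ioc] at hcard
  simp only [smallNonDivisors]
  omega

def smallPartEvent (N : ℕ) : Option ℕ → Finset ℕ → Prop
  | none, B => B ∩ Icc 1 (N / 2) = ∅
  | some a, B => B ∩ insert (N - a) (Icc 1 (N / 2)) = {a}

lemma inter_Icc_eq_of_smallPartEvent {N a : ℕ} {B : Finset ℕ} (ha : a ∈ smallNonDivisors N)
    (h : smallPartEvent N (some a) B) : B ∩ Icc 1 (N / 2) = {a} := by
  have hau : a ∈ Icc 1 (N / 2) := by have := mem_smallNonDivisors ha; simp; omega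
  rw [← singleton_inter_of_mem hau, ← show B ∩ insert (N - a) (Icc 1 (N / 2)) = {a} from h,
    inter_assoc, inter_eq_right.2 (subset_insert _ _)]

lemma smallPartEvent_unique {N : ℕ} {B : Finset ℕ} :
    ∀ o ∈ insertNone (smallNonDivisors N), ∀ o' ∈ insertNone (smallNonDivisors N),
      smallPartEvent N o B → smallPartEvent N o' B → o = o' := by
  rintro (_ | a) ho (_ | a') ho' h h'
  · rfl
  · have h'' := inter_Icc_eq_of_smallPartEvent (some_mem_insertNone.1 ho') h'
    rw [show B ∩ Icc 1 (N / 2) = ∅ from h] at h''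
    exact absurd h''.symm (singleton_ne_empty a')
  · have h'' := inter_Icc_eq_of_smallPartEvent (some_mem_insertNone.1 ho) h
    rw [show B ∩ Icc 1 (N / 2) = ∅ from h'] at h''
    exact absurd h''.symm (singleton_ne_empty a)
  · rw [singleton_injective <|
      (inter_Icc_eq_of_smallPartEvent (some_mem_insertNone.1 ho) h).symm.trans
        (inter_Icc_eq_of_smallPartEvent (some_mem_insertNone.1 ho') h')]

lemma not_mem_closure_of_smallPartEvent {N : ℕ} (hN : 0 < N) {B : Finset ℕ}
    (hB : B ⊆ Icc 1 (N - 1)) {o : Option ℕ} (ho : o ∈ insertNone (smallNonDivisors N))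
    (h : smallPartEvent N o B) : N ∉ AddSubmonoid.closure (B : Set ℕ) := by
  cases o with
  | none =>
    refine not_mem_closure_of_forall_half_lt hN fun b hb => ?_
    have hb1 := mem_Icc.1 (hB hb)
    have hbu : b ∉ Icc 1 (N / 2) := fun hbu => by
      simpa [show B ∩ Icc 1 (N / 2) = ∅ from h] using mem_inter.2 ⟨mem_coe.1 hb, hbu⟩
    simp only [mem_Icc, not_and, not_le] at hbu
    omega
  | some a =>
    have ha := mem_smallNonDivisors (some_mem_insertNone.1 ho)
    refine not_mem_closure_of_forall_eq_or_half_lt ha.2.1 ha.2.2.1 ha.2.2.2 fun b hb => ?_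
    have hb1 := mem_Icc.1 (hB hb)
    by_cases hba : b = a
    · exact Or.inl hba
    have hbu : b ∉ insert (N - a) (Icc 1 (N / 2)) := fun hbu => hba <| by
      simpa [show B ∩ insert (N - a) (Icc 1 (N / 2)) = {a} from h] using
        mem_inter.2 ⟨mem_coe.1 hb, hbu⟩
    simp only [mem_insert, mem_Icc, not_or, not_and, not_le] at hbu
    omega

lemma sum_bernProb_smallPartEvent {N : ℕ} (hN : 0 < N) :
    ∑ o ∈ insertNone (smallNonDivisors N), bernProb p (Icc 1 (N - 1)) (smallPartEvent N o)
      = (1 - p) ^ (N / 2) * (1 + p * #(smallNonDivisors N)) := by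
  have hus : Icc 1 (N / 2) ⊆ Icc 1 (N - 1) := Icc_subset_Icc le_rfl (by omega)
  have hsome (a : ℕ) (ha : a ∈ smallNonDivisors N) :
      bernProb p (Icc 1 (N - 1)) (smallPartEvent N (some a)) = p * (1 - p) ^ (N / 2) := by
    have := mem_smallNonDivisors ha
    have hau : {a} ⊆ insert (N - a) (Icc 1 (N / 2)) := by simp; omega
    have hsub : insert (N - a) (Icc 1 (N / 2)) ⊆ Icc 1 (N - 1) := insert_subset (by simp; omega) hus
    have hNa : N - a ∉ Icc 1 (N / 2) := by simp; omega
    rw [show smallPartEvent N (some a) = fun B => B ∩ insert (N - a) (Icc 1 (N / 2)) = {a} from rfl,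
      bernProb_inter_eq hau hsub, card_insert_of_notMem hNa, card_singleton, Nat.card_Icc]
    simp
  rw [sum_insertNone, sum_congr rfl hsome, sum_const, nsmul_eq_mul,
    show smallPartEvent N none = fun B => B ∩ Icc 1 (N / 2) = ∅ from rfl,
    bernProb_inter_eq (empty_subset _) hus]
  simp
  ring

lemma pow_mul_one_add_card_le_anp (hp0 : 0 ≤ p) (hp1 : p ≤ 1) {N : ℕ} (hN : 0 < N) :
    (1 - p) ^ (N / 2) * (1 + p * #(smallNonDivisors N)) ≤ anp N p := by
  rw [← sum_bernProb_smallPartEvent hN, sum_bernProb_of_pairwise _ _ fun B => smallPartEvent_unique,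
    anp_eq_bernProb]
  exact bernProb_mono hp0 hp1 fun B hB ⟨o, ho, h⟩ => not_mem_closure_of_smallPartEvent hN hB ho h

noncomputable def anpLower (p : ℝ) (N : ℕ) : ℝ :=
  (1 - p) ^ (N / 2) *
    (1 + p * ((((N / 2 + 1) / 2 : ℕ) : ℝ) - (if 2 ∣ N then 1 else 0) - (if 3 ∣ N then 1 else 0)))

lemma anpLower_le_anp (hp0 : 0 ≤ p) (hp1 : p ≤ 1) {N : ℕ} (hN : 0 < N) :
    anpLower p N ≤ anp N p := by
  refine le_trans ?_ (pow_mul_one_add_card_le_anp hp0 hp1 hN)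
  have hq : 0 ≤ 1 - p := by linarith
  have hcard : (((N / 2 + 1) / 2 : ℕ) : ℝ) ≤
      #(smallNonDivisors N) + (if 2 ∣ N then 1 else 0) + (if 3 ∣ N then 1 else 0) := by
    exact_mod_cast card_smallNonDivisors N
  rw [anpLower]
  gcongr
  linarith

lemma hasSum_anpLower (hp0 : 0 < p) (hp1 : p < 1) :
    HasSum (fun n => anpLower p (n + 1))
      ((18 - 46 * p + 52 * p ^ 2 - 33 * p ^ 3 + 12 * p ^ 4 - 2 * p ^ 5) /
        (p * (2 - p) * (3 - 3 * p + p ^ 2))) := by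
  have hq0 : 0 ≤ 1 - p := by linarith
  have hq1 : 1 - p < 1 := by linarith
  have hgeom := hasSum_geometric_of_lt_one hq0 hq1
  have hhalf := (hgeom.add ((hasSum_ceil_half_mul_geometric hq0 hq1).mul_left p)).comp_div_two
  have htwo := HasSum.ite_dvd (f := fun N => (1 - p) ^ (N / 2)) two_ne_zero (by simpa using hgeom)
  have hthree := HasSum.ite_dvd (f := fun N => (1 - p) ^ (N / 2)) three_ne_zero
    (hasSum_pow_three_mul_div_two hq0 hq1)
  have hall : HasSum (anpLower p) _ :=
    ((hhalf.sub (htwo.mul_left p)).sub (hthree.mul_left p)).congr_fun fun N => by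
      rw [anpLower]; split_ifs <;> ring
  have h := (hasSum_nat_add_iff' 1).2 hall
  rw [sum_range_one, anpLower, show (1 : ℝ) - (1 - p) = p by ring] at h
  convert h using 1
  · rfl
  · have h2 : 2 - p ≠ 0 := by linarith
    have h3 : 3 - 3 * p + p ^ 2 ≠ 0 := by nlinarith
    rw [show (1 : ℝ) - (1 - p) ^ 3 = p * (3 - 3 * p + p ^ 2) by ring]
    norm_num
    field_simp
    ring

lemma lowerBound_le_sum_anpLower (hp0 : 0 < p) (hp1 : p < 1) :
    (6 - 8 * p + 3 * p ^ 2) / (2 * p - 2 * p ^ 3 + p ^ 4) ≤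
      (18 - 46 * p + 52 * p ^ 2 - 33 * p ^ 3 + 12 * p ^ 4 - 2 * p ^ 5) /
        (p * (2 - p) * (3 - 3 * p + p ^ 2)) := by
  have hq : 0 < 1 - p := by linarith
  have hD : 0 < 2 - 2 * p ^ 2 + p ^ 3 := by nlinarith [pow_pos hp0 3]
  rw [div_le_div_iff₀ (by nlinarith [mul_pos hp0 hD]) (by nlinarith [mul_pos hp0 hq])]
  have key : (18 - 46 * p + 52 * p ^ 2 - 33 * p ^ 3 + 12 * p ^ 4 - 2 * p ^ 5) *
      (2 * p - 2 * p ^ 3 + p ^ 4) - (6 - 8 * p + 3 * p ^ 2) * (p * (2 - p) * (3 - 3 * p + p ^ 2)) =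
      p ^ 2 * (1 - p) ^ 3 *
        (1 + 2 * (1 - p) + 3 * (1 - p) ^ 2 + 2 * (1 - p) ^ 3 + 2 * (1 - p) ^ 4) := by ring
  have : 0 ≤ p ^ 2 * (1 - p) ^ 3 *
      (1 + 2 * (1 - p) + 3 * (1 - p) ^ 2 + 2 * (1 - p) ^ 3 + 2 * (1 - p) ^ 4) := by positivity
  linarith

end LowerBound

theorem statement16 (p : ℝ) (hp : p ∈ Set.Ioo (0 : ℝ) 1) :
    ∃ L : ℝ, HasSum (fun n : ℕ => anp (n + 1) p) L ∧
      (6 - 8 * p + 3 * p ^ 2) / (2 * p - 2 * p ^ 3 + p ^ 4) ≤ L ∧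
      L ≤ (2 - p ^ 2) / p ^ 2 := by
  obtain ⟨hp0, hp1⟩ := hp
  have hupper := hasSum_anpUpper hp0 hp1
  have hlower := hasSum_anpLower hp0 hp1
  have hle (n : ℕ) : anp (n + 1) p ≤ anpUpper p (n + 1) :=
    anp_le_anpUpper hp0.le hp1.le n.succ_pos
  have hge (n : ℕ) : anpLower p (n + 1) ≤ anp (n + 1) p :=
    anpLower_le_anp hp0.le hp1.le n.succ_pos
  have hsum : HasSum (fun n => anp (n + 1) p) _ :=
    (hupper.summable.of_nonneg_of_le (fun n => anp_nonneg hp0.le hp1.le _) hle).hasSum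
  refine ⟨_, hsum, (lowerBound_le_sum_anpLower hp0 hp1).trans (hasSum_le hge hlower hsum),
    (hasSum_le hle hsum hupper).trans ?_⟩
  gcongr
  nlinarith
end

section
/- Let n ≥ 2 and let T be a numerical semigroup with n ∉ T all of whose minimal generators are strictly less than n/2. Let B = {s ∈ ℕ : n/2 < s < n, s ∉ T, and n − s ∉ T}. Then S = T ∪ B ∪ {m ∈ ℕ : m > n} is an irreducible numerical semigroup with Frobenius number n. -/
open Filter Topology
open scoped Classical BigOperators

/-! If `n ∉ S` and `S` contains everything above `n`, then `S` is irreducible with Frobenius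
number `n` as soon as it is symmetric about `n`: every gap `x ≠ n / 2` has `n - x ∈ S`. Indeed a
numerical semigroup `U ⊋ S` with the same Frobenius number would contain some gap `x < n` of `S`,
and then also `x + x = n` or `x + (n - x) = n`. In `T ∪ B ∪ (n, ∞)` the set `B` supplies exactly
the missing partners `n - x` of the gaps `x < n / 2` of `T`, and the choice `n - s ∉ T` in the
definition of `B` is what keeps the union closed under addition. -/

section Frobenius

variable {S : AddSubmonoid ℕ} {n : ℕ}

theorem gapSet_subset_Iic (habove : ∀ m, n < m → m ∈ S) : gapSet S ⊆ Set.Iic n :=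
  fun x hx => not_lt.mp fun hnx => hx (habove x hnx)

theorem frob_eq_of_forall_gt_mem (hn : n ∉ S) (habove : ∀ m, n < m → m ∈ S) : frob S = n :=
  le_antisymm (csSup_le ⟨n, hn⟩ (gapSet_subset_Iic habove))
    (le_csSup ⟨n, gapSet_subset_Iic habove⟩ hn)

theorem frob_notMem (hbdd : BddAbove (gapSet S)) (hfrob : frob S ≠ 0) : frob S ∉ S := by
  have hne : (gapSet S).Nonempty := by
    rw [Set.nonempty_iff_ne_empty]
    rintro hempty
    exact hfrob (by rw [frob, hempty, csSup_empty]; rfl)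
  exact Nat.sSup_mem hne hbdd

theorem isIrred_of_sub_mem (hn : n ∉ S) (habove : ∀ m, n < m → m ∈ S)
    (hsym : ∀ x < n, x ∉ S → 2 * x ≠ n → n - x ∈ S) : IsIrred S := by
  have hfrob := frob_eq_of_forall_gt_mem hn habove
  refine ⟨(Set.finite_Iic n).subset (gapSet_subset_Iic habove), fun htop => hn (htop ▸ trivial),
    fun U hSU hfU => le_antisymm (fun x hxU => ?_) hSU⟩
  have hn0 : n ≠ 0 := fun h => hn (h ▸ S.zero_mem)
  have hnU : n ∉ U := by
    rw [hfrob] at hfU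
    rw [← hfU]
    exact frob_notMem ⟨n, gapSet_subset_Iic fun m hm => hSU (habove m hm)⟩ (hfU ▸ hn0)
  by_contra hxS
  have hxn : x < n := lt_of_le_of_ne (gapSet_subset_Iic habove hxS) (by rintro rfl; exact hnU hxU)
  by_cases hx2 : 2 * x = n
  · exact hnU (by simpa [← two_mul, hx2] using U.add_mem hxU hxU)
  · have := U.add_mem hxU (hSU (hsym x hxn hxS hx2))
    exact hnU (by rwa [Nat.add_sub_cancel' hxn.le] at this)

end Frobenius

section Extension

variable (T : AddSubmonoid ℕ) (n : ℕ)

def upperPartnerGaps : Set ℕ := {s : ℕ | n < 2 * s ∧ s < n ∧ s ∉ T ∧ n - s ∉ T}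

variable {T n}

theorem add_mem_of_mem_of_mem_upperPartnerGaps {t b : ℕ} (ht : t ∈ T)
    (hb : b ∈ upperPartnerGaps T n) :
    t + b ∈ (T : Set ℕ) ∪ upperPartnerGaps T n ∪ {m : ℕ | n < m} := by
  obtain ⟨hb2, hbn, -, hnb⟩ := hb
  rcases lt_or_ge n (t + b) with hlt | hle
  · exact Or.inr hlt
  by_cases htb : t + b ∈ T
  · exact Or.inl (Or.inl htb)
  have htbn : t + b ≠ n := by
    rintro hsum
    exact hnb (by rwa [← hsum, Nat.add_sub_cancel])
  refine Or.inl (Or.inr ⟨by omega, by omega, htb, fun hmem => hnb ?_⟩)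
  have := T.add_mem hmem ht
  rwa [show n - (t + b) + t = n - b by omega] at this

variable (T n)

def irreducibleExtension : AddSubmonoid ℕ where
  carrier := (T : Set ℕ) ∪ upperPartnerGaps T n ∪ {m : ℕ | n < m}
  zero_mem' := Or.inl (Or.inl T.zero_mem)
  add_mem' := by
    rintro a b ((ha | ha) | ha) ((hb | hb) | hb)
    · exact Or.inl (Or.inl (T.add_mem ha hb))
    · exact add_mem_of_mem_of_mem_upperPartnerGaps ha hb
    · exact Or.inr (Nat.lt_add_left a hb)
    · exact add_comm b a ▸ add_mem_of_mem_of_mem_upperPartnerGaps hb ha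
    · exact Or.inr (show n < a + b by have := ha.1; have := hb.1; omega)
    · exact Or.inr (Nat.lt_add_left a hb)
    all_goals exact Or.inr (Nat.lt_add_right b ha)

variable {T n}

theorem mem_irreducibleExtension {x : ℕ} :
    x ∈ irreducibleExtension T n ↔ (x ∈ T ∨ x ∈ upperPartnerGaps T n) ∨ n < x :=
  Iff.rfl

theorem notMem_irreducibleExtension (hnT : n ∉ T) : n ∉ irreducibleExtension T n := by
  rintro ((h | ⟨-, h, -⟩) | h) <;> first | exact hnT h | exact lt_irrefl n h

theorem sub_mem_irreducibleExtension {x : ℕ} (hxn : x < n)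
    (hx : x ∉ irreducibleExtension T n) (hx2 : 2 * x ≠ n) :
    n - x ∈ irreducibleExtension T n := by
  simp only [mem_irreducibleExtension, upperPartnerGaps, Set.mem_ofPred_eq, not_or] at hx ⊢
  obtain ⟨⟨hxT, hxB⟩, -⟩ := hx
  have hx0 : x ≠ 0 := by rintro rfl; exact hxT T.zero_mem
  rcases lt_or_gt_of_ne hx2 with hlt | hgt
  · by_cases hyT : n - x ∈ T
    · exact Or.inl (Or.inl hyT)
    · exact Or.inl (Or.inr ⟨by omega, by omega, hyT, by rwa [Nat.sub_sub_self hxn.le]⟩)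
  · exact Or.inl (Or.inl (not_not.mp fun hyT => hxB ⟨hgt, hxn, hxT, hyT⟩))

theorem isIrred_irreducibleExtension (hnT : n ∉ T) : IsIrred (irreducibleExtension T n) :=
  isIrred_of_sub_mem (notMem_irreducibleExtension hnT) (fun _ hm => Or.inr hm)
    fun _ hxn hx hx2 => sub_mem_irreducibleExtension hxn hx hx2

end Extension

theorem statement18_general (n : ℕ) (T : AddSubmonoid ℕ) (hnT : n ∉ T) :
    ∃ S : AddSubmonoid ℕ,
      (S : Set ℕ) = (T : Set ℕ)
          ∪ {s : ℕ | n < 2 * s ∧ s < n ∧ s ∉ T ∧ n - s ∉ T}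
          ∪ {m : ℕ | n < m} ∧
      IsIrred S ∧ frob S = n :=
  ⟨irreducibleExtension T n, rfl, isIrred_irreducibleExtension hnT,
    frob_eq_of_forall_gt_mem (notMem_irreducibleExtension hnT) fun _ hm => Or.inr hm⟩

theorem statement18 (n : ℕ) (hn : 2 ≤ n) (T : AddSubmonoid ℕ) (hnT : n ∉ T)
    (hgen : ∀ a ∈ minGens T, 2 * a < n) :
    ∃ S : AddSubmonoid ℕ,
      (S : Set ℕ) = (T : Set ℕ)
          ∪ {s : ℕ | n < 2 * s ∧ s < n ∧ s ∉ T ∧ n - s ∉ T}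
          ∪ {m : ℕ | n < m} ∧
      IsIrred S ∧ frob S = n :=
  statement18_general n T hnT
end

section
/- Let n ≥ 1 and j ≥ 2 be integers, and let A be a finite set of positive integers each of which lies strictly between n/(j+1) and n/j. Then A is precisely the set of minimal generators of the numerical semigroup ⟨A⟩, and n ∉ ⟨A⟩. -/
open Filter Topology
open scoped Classical BigOperators

/-!
A sum of `k ≥ 1` elements of `A` lies strictly between `k n / (j + 1)` and `k n / j`.
Since `n / j ≤ 2 n / (j + 1)`, no element of `A` is a sum of two or more generators;
and `n ∈ ⟨A⟩` would need some `k` with `k n / (j + 1) < n < k n / j`, i.e. `j < k < j + 1`.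
-/

namespace AddSubmonoid

lemma minGens_closure_subset (A : Set ℕ) : minGens (closure A) ⊆ A := by
  suffices ∀ s ∈ closure A, s = 0 ∨ s ∈ A ∨
      ∃ x ∈ closure A, ∃ y ∈ closure A, x ≠ 0 ∧ y ≠ 0 ∧ s = x + y by
    rintro s ⟨hs, hs0, hindec⟩
    exact ((this s hs).resolve_left hs0).resolve_right hindec
  intro s hs
  induction hs using closure_induction with
  | mem a ha => exact .inr (.inl ha)
  | zero => exact .inl rfl
  | add x y hx hy ihx ihy =>
      rcases eq_or_ne x 0 with rfl | hx0
      · simpa using ihy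
      rcases eq_or_ne y 0 with rfl | hy0
      · simpa using ihx
      exact .inr (.inr ⟨x, hx, y, hy, hx0, hy0, rfl⟩)

section Interval

variable {A : Set ℕ} {n p q : ℕ}

lemma exists_mul_lt_of_mem_closure (hA : ∀ a ∈ A, n < a * p ∧ a * q < n) {s : ℕ}
    (hs : s ∈ closure A) : s = 0 ∨ ∃ k, 1 ≤ k ∧ k * n < s * p ∧ s * q < k * n := by
  induction hs using closure_induction with
  | mem a ha => exact .inr ⟨1, le_rfl, by simpa using (hA a ha).1, by simpa using (hA a ha).2⟩
  | zero => exact .inl rfl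
  | add x y hx hy ihx ihy =>
      rcases ihx with rfl | ⟨k, hk, hkx, hxk⟩
      · simpa using ihy
      rcases ihy with rfl | ⟨l, hl, hly, hyl⟩
      · simpa using Or.inr ⟨k, hk, hkx, hxk⟩
      exact .inr ⟨k + l, by omega, by linarith [add_mul k l n, add_mul x y p],
        by linarith [add_mul k l n, add_mul x y q]⟩

lemma not_exists_add_of_bounds (hA : ∀ a ∈ A, n < a * p ∧ a * q < n) (hpq : p ≤ 2 * q)
    {a : ℕ} (ha : a ∈ A) :
    ¬ ∃ x ∈ closure A, ∃ y ∈ closure A, x ≠ 0 ∧ y ≠ 0 ∧ a = x + y := by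
  rintro ⟨x, hx, y, hy, hx0, hy0, rfl⟩
  obtain ⟨k, hk, hkx, -⟩ := (exists_mul_lt_of_mem_closure hA hx).resolve_left hx0
  obtain ⟨l, hl, hly, -⟩ := (exists_mul_lt_of_mem_closure hA hy).resolve_left hy0
  have hxy := (hA _ ha).2
  nlinarith

lemma minGens_closure_eq_of_bounds (hA : ∀ a ∈ A, n < a * p ∧ a * q < n) (hpq : p ≤ 2 * q) :
    minGens (closure A) = A := by
  refine (minGens_closure_subset A).antisymm fun a ha => ⟨subset_closure ha, ?_, ?_⟩
  · rintro rfl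
    simpa using (hA 0 ha).1
  · exact not_exists_add_of_bounds hA hpq ha

lemma notMem_closure_of_bounds (hA : ∀ a ∈ A, n < a * p ∧ a * q < n) (hpq : p ≤ q + 1)
    (hn : n ≠ 0) : n ∉ closure A := by
  intro hmem
  obtain ⟨k, -, hkp, hqk⟩ := (exists_mul_lt_of_mem_closure hA hmem).resolve_left hn
  have hk : k < p := lt_of_mul_lt_mul_right (by linarith [mul_comm n p]) (Nat.zero_le n)
  have hq : q < k := lt_of_mul_lt_mul_right (by linarith [mul_comm n q]) (Nat.zero_le n)
  omega

end Interval

end AddSubmonoid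

theorem statement19_general (n j : ℕ) (hn : 1 ≤ n) (hj : 2 ≤ j) (A : Set ℕ)
    (hbounds : ∀ a ∈ A, n < a * (j + 1) ∧ a * j < n) :
    minGens (AddSubmonoid.closure A) = A ∧ n ∉ AddSubmonoid.closure A :=
  ⟨AddSubmonoid.minGens_closure_eq_of_bounds hbounds (by omega),
    AddSubmonoid.notMem_closure_of_bounds hbounds le_rfl (by omega)⟩

theorem statement19 (n j : ℕ) (hn : 1 ≤ n) (hj : 2 ≤ j) (A : Set ℕ) (hA : A.Finite)
    (hbounds : ∀ a ∈ A, n < a * (j + 1) ∧ a * j < n) :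
    minGens (AddSubmonoid.closure A) = A ∧ n ∉ AddSubmonoid.closure A :=
  statement19_general n j hn hj A hbounds
end
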